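/- arXiv:1412.6822 — 3 statements merged into one kernel-verified Lean document; each statement's English description precedes it below -/
import Mathlib

section
/- There exists a constant C > 0 such that for every nonempty factor v of η and every factor w of η with |w| ≥ C·|v|, the word v occurs as a factor of w. (In other words, the subshift generated by the fixed point η of τ is linearly repetitive.) -/
/-- The four-letter alphabet `A = {a, x, y, z}`. -/
inductive A : Type
  | a | x | y | z
  deriving DecidableEq, Repr

/-- The substitution `τ : a ↦ axa, x ↦ y, y ↦ z, z ↦ x`. -/
def tau : A → List A
  | A.a => [A.a, A.x, A.a]
  | A.x => [A.y]
  | A.y => [A.z]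
  | A.z => [A.x]

/-- The substitution `τ` extended to finite words by concatenation. -/
def tauW (w : List A) : List A := w.flatMap tau

/-- `pw n = τⁿ(a)`, a word of length `2^(n+1) - 1`. -/
def pw : ℕ → List A
  | 0 => [A.a]
  | n + 1 => tauW (pw n)

/-- The fixed point `η` of `τ`: the unique one-sided infinite word having every
`τⁿ(a)` as a prefix.  (Since `pw (n+1)` has length `2^(n+2) - 1 > n`, reading its
`n`-th letter is well defined and independent of the choice of a large enough iterate.) -/
def eta (n : ℕ) : A := (pw (n + 1)).getD n A.a

/-- `w` is a (finite) factor of `η`. -/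
def IsFactorEta (w : List A) : Prop :=
  ∃ i : ℕ, w = (List.range w.length).map (fun k => eta (i + k))

/-!
Since `τ(a) = axa` and `τ` permutes `x → y → z → x`, we get `τⁿ⁺¹(a) = τⁿ(a) cₙ τⁿ(a)` with
`cₙ = τⁿ(x)`, and `η` is a ruler sequence: `η(k) = a` if `ν₂(k+1) = 0` and `η(k) = c_{e-1}`
if `ν₂(k+1) = e > 0`. Hence `η` is a concatenation of copies of `τⁿ(a)`, the copies being
separated at the positions `j·2ⁿ⁺¹ - 1` by the letters `c_{n+ν₂(j)}`. A factor `v` with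
`2ⁿ ≤ |v| < 2ⁿ⁺¹` lies inside some `τⁿ(a) s τⁿ(a)` with `s ∈ {x, y, z}`; since `ν₂` takes
each of the values `0, 1, 2` on any `8` consecutive integers, each of these three words
occurs in every factor of length `20·2ⁿ`. So `C = 20` works.
-/

def cycleLetter (n : ℕ) : A :=
  match n % 3 with
  | 0 => A.x
  | 1 => A.y
  | _ => A.z

lemma cycleLetter_congr {m m' : ℕ} (h : m % 3 = m' % 3) : cycleLetter m = cycleLetter m' := by
  simp only [cycleLetter, h]

lemma tau_cycleLetter (n : ℕ) : tau (cycleLetter n) = [cycleLetter (n + 1)] := by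
  have : (n + 1) % 3 = (n % 3 + 1) % 3 := by omega
  rcases (by omega : n % 3 = 0 ∨ n % 3 = 1 ∨ n % 3 = 2) with h | h | h <;>
    simp [cycleLetter, h, this, tau]

lemma pw_succ_eq (n : ℕ) : pw (n + 1) = pw n ++ cycleLetter n :: pw n := by
  induction n with
  | zero => rfl
  | succ n ih =>
    change tauW (pw (n + 1)) = tauW (pw n) ++ cycleLetter (n + 1) :: tauW (pw n)
    rw [ih]
    simp [tauW, tau_cycleLetter]

section Window

variable {α : Type*} (u : ℕ → α)

def window (i L : ℕ) : List α := (List.range L).map fun k => u (i + k)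

lemma window_add (i L₁ L₂ : ℕ) :
    window u i (L₁ + L₂) = window u i L₁ ++ window u (i + L₁) L₂ := by
  simp [window, List.range_add, add_assoc]

lemma window_one (i : ℕ) : window u i 1 = [u i] := rfl

lemma window_infix_window {i L i' L' : ℕ} (h₁ : i' ≤ i) (h₂ : i + L ≤ i' + L') :
    window u i L <:+: window u i' L' := by
  obtain ⟨a, rfl⟩ := Nat.exists_eq_add_of_le h₁
  obtain ⟨b, hb⟩ := Nat.exists_eq_add_of_le h₂
  obtain rfl : L' = a + (L + b) := by omega
  rw [window_add, window_add]
  exact ⟨window u i' a, window u (i' + a + L) b, by simp⟩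

end Window

lemma padicValNat_two_pow_mul_odd (e : ℕ) {o : ℕ} (ho : Odd o) :
    padicValNat 2 (2 ^ e * o) = e := by
  rw [padicValNat.mul (by positivity) ho.pos.ne', padicValNat.prime_pow,
    padicValNat.eq_zero_of_not_dvd ho.not_two_dvd_nat, add_zero]

lemma padicValNat_two_mul_pow_add (q : ℕ) {N m : ℕ} (hm₀ : 0 < m) (hm : m < 2 ^ N) :
    padicValNat 2 (q * 2 ^ N + m) = padicValNat 2 m := by
  obtain ⟨e, o, ho, rfl⟩ := Nat.exists_eq_two_pow_mul_odd hm₀.ne'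
  have he : e < N :=
    (Nat.pow_lt_pow_iff_right (by norm_num)).1 ((Nat.le_mul_of_pos_right _ ho.pos).trans_lt hm)
  have hsplit : q * 2 ^ N + 2 ^ e * o = 2 ^ e * (2 * (q * 2 ^ (N - e - 1)) + o) := by
    have h2N : 2 ^ N = 2 ^ e * (2 * 2 ^ (N - e - 1)) := by
      rw [← pow_succ', ← pow_add]
      congr 1
      omega
    rw [h2N]
    ring
  rw [hsplit, padicValNat_two_pow_mul_odd _ ho, padicValNat_two_pow_mul_odd]
  exact (even_two_mul _).add_odd ho

lemma exists_padicValNat_two_eq (M e : ℕ) :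
    ∃ m, M < m ∧ m ≤ M + 2 ^ (e + 1) ∧ padicValNat 2 m = e := by
  obtain ⟨t, r, hr, hM⟩ : ∃ t r, r < 2 ^ (e + 1) ∧ M + 2 ^ e = 2 ^ (e + 1) * t + r :=
    ⟨_, _, Nat.mod_lt _ (by positivity), (Nat.div_add_mod _ _).symm⟩
  refine ⟨2 ^ e * (2 * t + 1), ?_, ?_, padicValNat_two_pow_mul_odd e (odd_two_mul_add_one t)⟩
  all_goals
    simp only [pow_succ] at hr hM ⊢
    linarith

def rulerLetter (k : ℕ) : A :=
  match padicValNat 2 (k + 1) with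
  | 0 => A.a
  | e + 1 => cycleLetter e

lemma rulerLetter_mul_two_pow_add (j : ℕ) {N k : ℕ} (hk : k + 1 < 2 ^ N) :
    rulerLetter (j * 2 ^ N + k) = rulerLetter k := by
  rw [rulerLetter, rulerLetter, add_assoc, padicValNat_two_mul_pow_add j k.succ_pos hk]

lemma rulerLetter_mul_two_pow_add_two_pow_sub_one (j n : ℕ) :
    rulerLetter (j * 2 ^ (n + 1) + (2 ^ (n + 1) - 1)) =
      cycleLetter (n + padicValNat 2 (j + 1)) := by
  have hpos : 1 ≤ 2 ^ (n + 1) := Nat.one_le_two_pow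
  have hsucc : j * 2 ^ (n + 1) + (2 ^ (n + 1) - 1) + 1 = (j + 1) * 2 ^ (n + 1) := by
    rw [add_mul, one_mul]
    omega
  rw [rulerLetter, hsucc, padicValNat.mul (by positivity) (by positivity),
    padicValNat.prime_pow, ← add_assoc, add_comm (padicValNat 2 (j + 1))]

lemma window_rulerLetter_mul_two_pow (j N : ℕ) :
    window rulerLetter (j * 2 ^ N) (2 ^ N - 1) = window rulerLetter 0 (2 ^ N - 1) := by
  refine List.map_congr_left fun k hk => ?_
  rw [List.mem_range] at hk
  rw [zero_add, rulerLetter_mul_two_pow_add j (by omega)]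

lemma pw_eq_window_rulerLetter (n : ℕ) : pw n = window rulerLetter 0 (2 ^ (n + 1) - 1) := by
  induction n with
  | zero => simp [pw, window, rulerLetter]
  | succ n ih =>
    have hpos : 1 ≤ 2 ^ (n + 1) := Nat.one_le_two_pow
    have hsplit : 2 ^ (n + 1 + 1) - 1 = (2 ^ (n + 1) - 1) + (1 + (2 ^ (n + 1) - 1)) := by
      rw [pow_succ]
      omega
    have hsep := rulerLetter_mul_two_pow_add_two_pow_sub_one 0 n
    rw [zero_mul, zero_add, zero_add, padicValNat_one_right, add_zero] at hsep
    have hper := window_rulerLetter_mul_two_pow 1 (n + 1)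
    rw [one_mul] at hper
    rw [pw_succ_eq, ih, hsplit, window_add, window_add, window_one, zero_add, hsep,
      Nat.sub_add_cancel hpos, hper]
    rfl

lemma eta_eq_rulerLetter : eta = rulerLetter := by
  funext k
  have hk : k < 2 ^ (k + 1 + 1) - 1 := by
    have := Nat.lt_two_pow_self (n := k)
    rw [pow_succ, pow_succ]
    omega
  rw [eta, pw_eq_window_rulerLetter, List.getD_eq_getElem _ _ (by simpa [window] using hk)]
  simp [window]

lemma window_eta_eq_pw (j n : ℕ) : window eta (j * 2 ^ (n + 1)) (2 ^ (n + 1) - 1) = pw n := by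
  rw [eta_eq_rulerLetter, window_rulerLetter_mul_two_pow, pw_eq_window_rulerLetter]

lemma window_eta_eq_pw_cons_pw (j n : ℕ) :
    window eta (j * 2 ^ (n + 1)) (2 * 2 ^ (n + 1) - 1) =
      pw n ++ cycleLetter (n + padicValNat 2 (j + 1)) :: pw n := by
  have hpos : 1 ≤ 2 ^ (n + 1) := Nat.one_le_two_pow
  have hsplit : 2 * 2 ^ (n + 1) - 1 = (2 ^ (n + 1) - 1) + (1 + (2 ^ (n + 1) - 1)) := by omega
  have hnext : j * 2 ^ (n + 1) + (2 ^ (n + 1) - 1) + 1 = (j + 1) * 2 ^ (n + 1) := by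
    rw [add_mul, one_mul]
    omega
  rw [hsplit, window_add, window_add, window_one, hnext, window_eta_eq_pw, window_eta_eq_pw,
    eta_eq_rulerLetter, rulerLetter_mul_two_pow_add_two_pow_sub_one]
  rfl

lemma window_eta_infix_pw_cons_pw {L n : ℕ} (i : ℕ) (hL : L < 2 ^ (n + 1)) :
    window eta i L <:+: pw n ++ cycleLetter (n + padicValNat 2 (i / 2 ^ (n + 1) + 1)) :: pw n := by
  rw [← window_eta_eq_pw_cons_pw]
  have hdiv := Nat.div_add_mod' i (2 ^ (n + 1))
  have hmod := Nat.mod_lt i (Nat.two_pow_pos (n + 1))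
  exact window_infix_window _ (by omega) (by omega)

lemma pw_cons_pw_infix_window_eta {L n : ℕ} (i e : ℕ) (hL : 10 * 2 ^ (n + 1) ≤ L) :
    pw n ++ cycleLetter (n + e) :: pw n <:+: window eta i L := by
  obtain ⟨q, r, hr, rfl⟩ : ∃ q r, r < 2 ^ (n + 1) ∧ i = q * 2 ^ (n + 1) + r :=
    ⟨_, _, Nat.mod_lt _ (by positivity), (Nat.div_add_mod' _ _).symm⟩
  obtain ⟨m, hqm, hmq, hm⟩ := exists_padicValNat_two_eq (q + 1) (e % 3)
  have h8 : 2 ^ (e % 3 + 1) ≤ 8 := by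
    have : e % 3 < 3 := Nat.mod_lt e (by norm_num)
    interval_cases e % 3 <;> norm_num
  obtain ⟨j, rfl⟩ := Nat.exists_eq_add_one_of_ne_zero (by omega : m ≠ 0)
  have hcycle : cycleLetter (n + e) = cycleLetter (n + padicValNat 2 (j + 1)) :=
    cycleLetter_congr (by rw [hm]; omega)
  rw [hcycle, ← window_eta_eq_pw_cons_pw]
  have hlow : (q + 1) * 2 ^ (n + 1) ≤ j * 2 ^ (n + 1) := Nat.mul_le_mul_right _ (by omega)
  have hhigh : j * 2 ^ (n + 1) ≤ (q + 8) * 2 ^ (n + 1) := Nat.mul_le_mul_right _ (by omega)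
  simp only [add_mul] at hlow hhigh
  exact window_infix_window _ (by omega) (by omega)

lemma window_eta_infix_window_eta {L L' : ℕ} (i i' : ℕ) (hL : 0 < L) (hLL' : 20 * L ≤ L') :
    window eta i L <:+: window eta i' L' := by
  set n := Nat.log 2 L
  have hlow : 2 ^ n ≤ L := Nat.pow_log_le_self 2 hL.ne'
  have hhigh : L < 2 ^ (n + 1) := Nat.lt_pow_succ_log_self (by norm_num) L
  exact (window_eta_infix_pw_cons_pw i hhigh).trans
    (pw_cons_pw_infix_window_eta i' _ (by rw [pow_succ]; omega))

/-- **Linear repetitivity** of the subshift generated by the fixed point `η` of `τ`: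
there is a constant `C > 0` such that every nonempty factor `v` of `η` occurs in
every factor `w` of `η` whose length is at least `C * |v|`. -/
theorem eta_linearly_repetitive :
    ∃ C : ℝ, 0 < C ∧
      ∀ v w : List A, IsFactorEta v → v ≠ [] → IsFactorEta w →
        C * v.length ≤ (w.length : ℝ) → v <:+: w := by
  refine ⟨20, by norm_num, ?_⟩
  rintro v w ⟨i, hv⟩ hne ⟨i', hw⟩ hlen
  rw [hv, hw]
  exact window_eta_infix_window_eta i i' (List.length_pos_iff.2 hne) (by exact_mod_cast hlen)
end

section
/- Let B be any type and let C : A → B be a map such that C(x), C(y), C(z) are not all equal. Then: (i) no element of the recoded subshift is periodic, i.e., for every ω ∈ Ω_τ and every integer p ≥ 1 there exists n ∈ ℤ with C(ω(n+p)) ≠ C(ω(n)); and (ii) the recoded system is linearly repetitive, i.e., there exists K > 0 such that every nonempty factor v of the recoded word C∘η occurs in every factor w of C∘η with |w| ≥ K·|v|. -/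
/-- `Ω_τ`: the set of two-sided sequences all of whose finite factors are factors of `η`. -/
def OmegaTau (ω : ℤ → A) : Prop :=
  ∀ (i : ℤ) (n : ℕ), IsFactorEta ((List.range n).map (fun k => ω (i + k)))

/-- `w` is a factor of the recoded word `C ∘ η`. -/
def IsFactorEtaC {B : Type*} (C : A → B) (w : List B) : Prop :=
  ∃ i : ℕ, w = (List.range w.length).map (fun k => C (eta (i + k)))

def psi : A → A
  | A.a => A.x
  | A.x => A.y
  | A.y => A.z
  | A.z => A.x

lemma psi_ne_a (c : A) : psi c ≠ A.a := by cases c <;> decide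

lemma tau_psi (c : A) : tau (psi c) = [psi (psi c)] := by cases c <;> rfl

def etaRec (n : ℕ) : A :=
  if n % 2 = 0 then A.a else psi (etaRec (n / 2))

lemma etaRec_two_mul (k : ℕ) : etaRec (2 * k) = A.a := by
  rw [etaRec]; simp

lemma etaRec_two_mul_add_one (k : ℕ) : etaRec (2 * k + 1) = psi (etaRec k) := by
  rw [etaRec, if_neg (by omega), show (2 * k + 1) / 2 = k by omega]

lemma tauW_append (u v : List A) : tauW (u ++ v) = tauW u ++ tauW v := List.flatMap_append

lemma tauW_map_etaRec_range (l : ℕ) :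
    tauW ((List.range (2 * l + 1)).map etaRec) = (List.range (4 * l + 3)).map etaRec := by
  induction l with
  | zero =>
    have h₀ : etaRec 0 = A.a := etaRec_two_mul 0
    have h₁ : etaRec 1 = A.x := by rw [etaRec_two_mul_add_one 0, h₀]; rfl
    have h₂ : etaRec 2 = A.a := etaRec_two_mul 1
    simp [List.range_succ, tauW, tau, h₀, h₁, h₂]
  | succ l ih =>
    rw [show 2 * (l + 1) + 1 = (2 * l + 1) + 2 by ring,
      show 4 * (l + 1) + 3 = (4 * l + 3) + 4 by ring, List.range_add (n := 2 * l + 1), List.range_add (n := 4 * l + 3), List.map_append,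
      List.map_append, tauW_append, ih]
    -- `τ` maps the new pair `psi (η l), a` to `psi (psi (η l)), a, x, a`
    congr 1
    have h₁ : etaRec (2 * l + 1 + 1) = A.a := etaRec_two_mul (l + 1)
    have h₂ : etaRec (4 * l + 3 + 1) = A.a := by
      rw [show 4 * l + 3 + 1 = 2 * (2 * l + 2) by ring, etaRec_two_mul]
    have h₃ : etaRec (4 * l + 3 + 2) = A.x := by
      rw [show 4 * l + 3 + 2 = 2 * (2 * (l + 1)) + 1 by ring, etaRec_two_mul_add_one,
        etaRec_two_mul]; rfl
    have h₄ : etaRec (4 * l + 3 + 3) = A.a := by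
      rw [show 4 * l + 3 + 3 = 2 * (2 * l + 3) by ring, etaRec_two_mul]
    have h₅ : etaRec (4 * l + 3) = psi (psi (etaRec l)) := by
      rw [show 4 * l + 3 = 2 * (2 * l + 1) + 1 by ring, etaRec_two_mul_add_one,
        etaRec_two_mul_add_one]
    simp [List.range_succ, tauW, h₁, h₂, h₃, h₄, h₅, etaRec_two_mul_add_one, tau_psi,
      show tau A.a = [A.a, A.x, A.a] from rfl]

lemma pw_eq_map_etaRec (m : ℕ) : pw m = (List.range (2 ^ (m + 1) - 1)).map etaRec := by
  induction m with
  | zero => simp [pw, etaRec_two_mul 0]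
  | succ m ih =>
    have h : 2 ^ (m + 1) - 1 = 2 * (2 ^ m - 1) + 1 := by
      have := Nat.one_le_two_pow (n := m); rw [pow_succ]; omega
    have h' : 2 ^ (m + 1 + 1) - 1 = 4 * (2 ^ m - 1) + 3 := by
      have := Nat.one_le_two_pow (n := m); rw [pow_succ, pow_succ]; omega
    rw [pw, ih, h, tauW_map_etaRec_range, h']

lemma eta_eq_etaRec : eta = etaRec := by
  funext n
  have hn : n < 2 ^ (n + 1 + 1) - 1 := by
    have := Nat.lt_two_pow_self (n := n + 1 + 1); omega
  rw [eta, pw_eq_map_etaRec, List.getD_eq_getElem?_getD, List.getElem?_map,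
    List.getElem?_range hn]
  rfl

lemma eta_two_mul (k : ℕ) : eta (2 * k) = A.a := by
  rw [eta_eq_etaRec, etaRec_two_mul]

lemma eta_two_mul_add_one (k : ℕ) : eta (2 * k + 1) = psi (eta k) := by
  rw [eta_eq_etaRec, etaRec_two_mul_add_one]

lemma eta_of_even {n : ℕ} (h : n % 2 = 0) : eta n = A.a := by
  rw [← Nat.div_add_mod n 2, h, add_zero, eta_two_mul]

lemma eta_ne_a_of_odd {n : ℕ} (h : n % 2 = 1) : eta n ≠ A.a := by
  rw [← Nat.div_add_mod n 2, h, eta_two_mul_add_one]; exact psi_ne_a _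

lemma eta_two_pow_mul_add_congr {q q' : ℕ} (hq : eta q = eta q') (M : ℕ) {r : ℕ}
    (hr : r < 2 ^ M) : eta (2 ^ M * q + r) = eta (2 ^ M * q' + r) := by
  induction M generalizing r with
  | zero => simpa [Nat.lt_one_iff.mp hr] using hq
  | succ M ih =>
    obtain ⟨r', rfl | rfl⟩ : ∃ r', r = 2 * r' ∨ r = 2 * r' + 1 := ⟨r / 2, by omega⟩
    · rw [pow_succ, mul_comm _ 2, mul_assoc, mul_assoc, ← mul_add, ← mul_add, eta_two_mul,
        eta_two_mul]
    · rw [pow_succ, mul_comm _ 2, mul_assoc, mul_assoc, ← add_assoc, ← add_assoc, ← mul_add,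
        ← mul_add, eta_two_mul_add_one, eta_two_mul_add_one, ih (by rw [pow_succ] at hr; omega)]

lemma eta_two_pow_mul_add_pred (M q : ℕ) : eta (2 ^ M * q + (2 ^ M - 1)) = psi^[M] (eta q) := by
  induction M with
  | zero => simp
  | succ M ih =>
    have h : 2 ^ (M + 1) * q + (2 ^ (M + 1) - 1) = 2 * (2 ^ M * q + (2 ^ M - 1)) + 1 := by
      have := Nat.one_le_two_pow (n := M); rw [pow_succ]; grind
    rw [h, eta_two_mul_add_one, ih, Function.iterate_succ_apply']

lemma exists_odd_eta_eq (c : A) (hc : c ≠ A.a) (s : ℕ) :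
    ∃ e, s ≤ e ∧ e < s + 16 ∧ e % 2 = 1 ∧ eta e = c := by
  obtain ⟨v, hv, hvc⟩ : ∃ v, v < 3 ∧ psi^[v + 1] A.a = c := by
    cases c
    exacts [absurd rfl hc, ⟨0, by omega, rfl⟩, ⟨1, by omega, rfl⟩, ⟨2, by omega, rfl⟩]
  -- positions `≡ 2^(v+1) - 1 (mod 2^(v+2))` carry `psi^[v+1] a`
  set P := 2 ^ (v + 1) with hP
  have hP2 : P = 2 * 2 ^ v := by rw [hP, pow_succ, mul_comm]
  have hP8 : P ≤ 8 := hP ▸ Nat.pow_le_pow_right (by norm_num) (by omega : v + 1 ≤ 3)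
  set q := (s + P) / (2 * P)
  have h₁ := Nat.div_add_mod (s + P) (2 * P)
  have h₂ := Nat.mod_lt (s + P) (by positivity : 0 < 2 * P)
  refine ⟨P * (2 * q) + (P - 1), by grind, by grind, by grind, ?_⟩
  rw [hP, eta_two_pow_mul_add_pred, eta_two_mul, hvc]

lemma exists_eta_pair_eq (q s : ℕ) :
    ∃ q', s ≤ q' ∧ q' < s + 17 ∧ eta q' = eta q ∧ eta (q' + 1) = eta (q + 1) := by
  rcases Nat.mod_two_eq_zero_or_one q with hq | hq
  · obtain ⟨e, hse, hes, he, hec⟩ :=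
      exists_odd_eta_eq _ (eta_ne_a_of_odd (n := q + 1) (by omega)) (s + 1)
    refine ⟨e - 1, by omega, by omega, ?_, by rw [Nat.sub_add_cancel (by omega), hec]⟩
    rw [eta_of_even hq, eta_of_even (by omega)]
  · obtain ⟨e, hse, hes, he, hec⟩ := exists_odd_eta_eq _ (eta_ne_a_of_odd hq) s
    exact ⟨e, hse, by omega, hec, by rw [eta_of_even (by omega), eta_of_even (by omega)]⟩

lemma exists_window_eta_eq_two_pow (M i j : ℕ) :
    ∃ i', j ≤ i' ∧ i' < j + 19 * 2 ^ M ∧ ∀ k < 2 ^ M, eta (i' + k) = eta (i + k) := by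
  have hP : 0 < 2 ^ M := Nat.two_pow_pos M
  obtain ⟨q, r, hr, rfl⟩ : ∃ q r, r < 2 ^ M ∧ i = 2 ^ M * q + r :=
    ⟨i / 2 ^ M, i % 2 ^ M, Nat.mod_lt _ hP, (Nat.div_add_mod i _).symm⟩
  obtain ⟨t, u, hu, rfl⟩ : ∃ t u, u < 2 ^ M ∧ j = 2 ^ M * t + u :=
    ⟨j / 2 ^ M, j % 2 ^ M, Nat.mod_lt _ hP, (Nat.div_add_mod j _).symm⟩
  obtain ⟨q', htq, hqt, hq₀, hq₁⟩ := exists_eta_pair_eq q (t + 1)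
  have hlow := Nat.mul_le_mul_left (2 ^ M) htq
  have hup := Nat.mul_le_mul_left (2 ^ M) (Nat.le_of_lt_succ hqt)
  rw [mul_add] at hlow hup
  refine ⟨2 ^ M * q' + r, by omega, by omega, fun k hk ↦ ?_⟩
  by_cases hrk : r + k < 2 ^ M
  · rw [add_assoc, add_assoc, eta_two_pow_mul_add_congr hq₀ M hrk]
  · have h₁ := eta_two_pow_mul_add_congr hq₁ M (r := r + k - 2 ^ M) (by omega)
    rw [mul_add_one, mul_add_one] at h₁
    convert h₁ using 2 <;> omega

lemma exists_window_eta_eq {L : ℕ} (hL : 0 < L) (i j : ℕ) :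
    ∃ i', j ≤ i' ∧ i' + L ≤ j + 39 * L ∧ ∀ k < L, eta (i' + k) = eta (i + k) := by
  set M := Nat.log 2 L + 1
  have hLM : L < 2 ^ M := Nat.lt_pow_succ_log_self (by norm_num) L
  have hML : 2 ^ M ≤ 2 * L := by
    rw [pow_succ, mul_comm]
    exact Nat.mul_le_mul_left 2 (Nat.pow_log_le_self 2 hL.ne')
  obtain ⟨i', hji, hij, heq⟩ := exists_window_eta_eq_two_pow M i j
  exact ⟨i', hji, by omega, fun k hk ↦ heq k (by omega)⟩

lemma exists_recoded_shift_ne {B : Type*} (p : ℕ) (hp : 0 < p) (C : A → B)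
    (hC : ¬ (C A.x = C A.y ∧ C A.y = C A.z)) :
    ∃ N, ∀ i, ∃ k, k + p < N ∧ C (eta (i + k + p)) ≠ C (eta (i + k)) := by
  induction p using Nat.strong_induction_on generalizing C with
  | _ p ih =>
    rcases Nat.even_or_odd' p with ⟨q, rfl | rfl⟩
    · obtain ⟨N, hN⟩ := ih q (by omega) (by omega) (C ∘ psi)
        fun h ↦ hC ⟨(h.1.trans h.2).symm, h.1⟩
      refine ⟨2 * N + 2, fun i ↦ ?_⟩
      obtain ⟨k, hkN, hk⟩ := hN (i / 2)
      refine ⟨2 * (i / 2 + k) + 1 - i, by omega, ?_⟩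
      rw [show i + (2 * (i / 2 + k) + 1 - i) + 2 * q = 2 * (i / 2 + k + q) + 1 by omega,
        show i + (2 * (i / 2 + k) + 1 - i) = 2 * (i / 2 + k) + 1 by omega,
        eta_two_mul_add_one, eta_two_mul_add_one]
      exact hk
    · obtain ⟨t, hta, htC⟩ : ∃ t, t ≠ A.a ∧ C t ≠ C A.a := by
        by_contra! h
        exact hC ⟨(h A.x (by decide)).trans (h A.y (by decide)).symm,
          (h A.y (by decide)).trans (h A.z (by decide)).symm⟩
      refine ⟨2 * q + 1 + 16, fun i ↦ ?_⟩
      obtain ⟨e, hie, hei, he, het⟩ := exists_odd_eta_eq t hta (i + (2 * q + 1))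
      refine ⟨e - (2 * q + 1) - i, by omega, ?_⟩
      rw [show i + (e - (2 * q + 1) - i) + (2 * q + 1) = e by omega, het,
        eta_of_even (by omega)]
      exact htC

/-- In `OmegaTau` the window `List.range n` is coerced to `List ℤ` by a monadic bind,
which `List.map_eq_flatMap` turns back into a `List.map`. -/
lemma OmegaTau.exists_eq_eta {ω : ℤ → A} (hω : OmegaTau ω) (n : ℕ) :
    ∃ i, ∀ k < n, ω k = eta (i + k) := by
  obtain ⟨i, hi⟩ := hω 0 n
  refine ⟨i, fun k hk ↦ ?_⟩
  have := congrArg (·[k]?) hi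
  simpa [← List.map_eq_flatMap, hk] using this

lemma OmegaTau.exists_recoded_ne {B : Type*} {C : A → B} {ω : ℤ → A} (hω : OmegaTau ω)
    (hC : ¬ (C A.x = C A.y ∧ C A.y = C A.z)) {p : ℤ} (hp : 0 < p) :
    ∃ n : ℤ, C (ω (n + p)) ≠ C (ω n) := by
  lift p to ℕ using hp.le
  obtain ⟨N, hN⟩ := exists_recoded_shift_ne p (by omega) C hC
  obtain ⟨i, hi⟩ := hω.exists_eq_eta N
  obtain ⟨k, hkN, hk⟩ := hN i
  refine ⟨k, ?_⟩
  rw [← Nat.cast_add, hi k (by omega), hi (k + p) hkN, ← add_assoc]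
  exact hk

lemma List.map_range_infix_of_add_le {β : Type*} (f : ℕ → β) {d L n : ℕ} (h : d + L ≤ n) :
    (List.range L).map (fun k ↦ f (d + k)) <:+: (List.range n).map f := by
  rw [List.infix_iff_getElem?]
  refine ⟨d, by simpa [add_comm] using h, fun k hk ↦ ?_⟩
  simp only [List.length_map, List.length_range] at hk
  rw [List.getElem?_map, List.getElem?_range (by omega)]
  simp [add_comm]

lemma IsFactorEtaC.infix_of_length_le {B : Type*} {C : A → B} {v w : List B}
    (hv : IsFactorEtaC C v) (hv₀ : v ≠ []) (hw : IsFactorEtaC C w)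
    (hvw : 39 * v.length ≤ w.length) : v <:+: w := by
  obtain ⟨iv, hv⟩ := hv
  obtain ⟨iw, hw⟩ := hw
  obtain ⟨i', hwi, hiw, heq⟩ := exists_window_eta_eq (List.length_pos_iff.mpr hv₀) iv iw
  have hv' : v = (List.range v.length).map (fun k ↦ C (eta (iw + ((i' - iw) + k)))) := by
    rw [hv, List.length_map, List.length_range]
    refine List.map_congr_left fun k hk ↦ ?_
    rw [← add_assoc, Nat.add_sub_cancel' hwi, heq k (List.mem_range.mp hk)]
  rw [hv', hw]
  exact List.map_range_infix_of_add_le (fun k ↦ C (eta (iw + k))) (by omega)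

/-- If `C : A → B` does not identify all three of `x, y, z`, then the recoded system is
aperiodic and linearly repetitive. -/
theorem recoded_aperiodic_and_linearly_repetitive {B : Type*} (C : A → B)
    (hC : ¬ (C A.x = C A.y ∧ C A.y = C A.z)) :
    (∀ ω : ℤ → A, OmegaTau ω → ∀ p : ℤ, 1 ≤ p →
      ∃ n : ℤ, C (ω (n + p)) ≠ C (ω n)) ∧
    (∃ K : ℝ, 0 < K ∧
      ∀ v w : List B, IsFactorEtaC C v → v ≠ [] → IsFactorEtaC C w →
        K * v.length ≤ (w.length : ℝ) → v <:+: w) :=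
  ⟨fun _ hω _ hp ↦ hω.exists_recoded_ne hC hp,
    39, by norm_num,
    fun _ _ hv hv₀ hw hvw ↦ hv.infix_of_length_le hv₀ hw (by exact_mod_cast hvw)⟩
end

section
/- For every ω ∈ Ω_τ and every n ∈ ℕ there exists a unique residue class P⁽ⁿ⁾(ω) ∈ ℤ/2ⁿ⁺¹ℤ such that for every q ∈ ℤ whose class modulo 2ⁿ⁺¹ is P⁽ⁿ⁾(ω) one has ω(q) ∈ {x,y,z} and ω(q+1)ω(q+2)⋯ω(q+2ⁿ⁺¹−1) = p⁽ⁿ⁾. Moreover, the resulting map P⁽ⁿ⁾ : Ω_τ → ℤ/2ⁿ⁺¹ℤ is continuous (with respect to the product topology on Aᶻ restricted to Ω_τ and the discrete topology on ℤ/2ⁿ⁺¹ℤ) and equivariant with the shift: P⁽ⁿ⁾(Tω) = P⁽ⁿ⁾(ω) − 1 in ℤ/2ⁿ⁺¹ℤ. -/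
instance : TopologicalSpace A := ⊥
instance : DiscreteTopology A := ⟨rfl⟩

/-- `P ∈ ℤ/2^(n+1)ℤ` is an `n`-partition of `ω`: for every `q` in the class `P`,
`ω(q) ∈ {x,y,z}` and `ω(q+1)⋯ω(q+2^(n+1)-1) = p⁽ⁿ⁾`. -/
def IsNPartition (n : ℕ) (ω : ℤ → A) (P : ZMod (2 ^ (n + 1))) : Prop :=
  ∀ q : ℤ, (q : ZMod (2 ^ (n + 1))) = P →
    ω q ∈ ({A.x, A.y, A.z} : Set A) ∧
    (List.range (2 ^ (n + 1) - 1)).map (fun k => ω (q + 1 + k)) = pw n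

/-!
Write `σ` (`rot`) for the cyclic permutation `x ↦ y ↦ z ↦ x` of the non-`a` letters. Then
`p⁽ⁿ⁺¹⁾ = p⁽ⁿ⁾ σⁿ(x) p⁽ⁿ⁾`, and `η` has the closed form `η(2m) = a`, `η(2t+1) = σʲ(x)` with `j` the
number of trailing ones of `t` in binary. So `η` is a concatenation of blocks `p⁽ⁿ⁾` separated by
the letters `η(2ⁿ⁺¹(i+1) − 1) = σⁿ(η(2i+1)) ≠ a`: every position `≡ −1 mod 2ⁿ⁺¹` is a *marker*,
a letter `≠ a` followed by `p⁽ⁿ⁾`. Conversely, by induction on `n`, a *double marker* (markers at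
`q` and at `q + 2ⁿ⁺¹`) of `η` can only sit at `q ≡ −1 mod 2ⁿ⁺¹`; a single marker can sit
elsewhere, because `σ` has order 3.

Every finite window of `ω ∈ Ω_τ` is a window of `η`, so the double markers of `ω` form exactly one
residue class mod `2ⁿ⁺¹`, which is `P⁽ⁿ⁾(ω)`. Whether `q` is a double marker depends on finitely
many coordinates of `ω`, whence continuity; shifting `ω` moves the class by `−1`.
-/

def rot : A → A
  | A.a => A.a
  | A.x => A.y
  | A.y => A.z
  | A.z => A.x

theorem rot_ne_a {b : A} (h : b ≠ A.a) : rot b ≠ A.a := by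
  cases b <;> simp_all [rot]

theorem rot_injective : Function.Injective rot := by
  intro b c h; cases b <;> cases c <;> simp_all [rot]

theorem rot_eq_x_iff {b : A} : rot b = A.x ↔ b = A.z := by
  cases b <;> simp [rot]

theorem tau_of_ne_a {b : A} (h : b ≠ A.a) : tau b = [rot b] := by
  cases b <;> simp_all [tau, rot]

theorem iterate_rot_x_ne_a (n : ℕ) : rot^[n] A.x ≠ A.a := by
  induction n with
  | zero => simp
  | succ n ih => rw [Function.iterate_succ_apply']; exact rot_ne_a ih

theorem pw_succ (n : ℕ) : pw (n + 1) = pw n ++ rot^[n] A.x :: pw n := by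
  induction n with
  | zero => decide
  | succ n ih =>
    show tauW (pw (n + 1)) = _
    conv_lhs => rw [ih, tauW, List.flatMap_append, List.flatMap_cons,
      tau_of_ne_a (iterate_rot_x_ne_a n), ← tauW, ← pw]
    rw [Function.iterate_succ_apply']
    rfl

theorem length_pw (n : ℕ) : (pw n).length = 2 ^ (n + 1) - 1 := by
  induction n with
  | zero => rfl
  | succ n ih =>
    rw [pw_succ, List.length_append, List.length_cons, ih, pow_succ 2 (n + 1)]
    have := Nat.one_le_two_pow (n := n + 1)
    omega

/-- `η (2t+1) = oddLetter t = rot^[j] x`, where `j` is the number of trailing ones of `t`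
in binary. -/
def oddLetter (t : ℕ) : A :=
  if h : t % 2 = 0 then A.x else rot (oddLetter (t / 2))
decreasing_by omega

theorem oddLetter_of_even {t : ℕ} (h : t % 2 = 0) : oddLetter t = A.x := by
  rw [oddLetter]; simp [h]

theorem oddLetter_two_mul_add_one (t : ℕ) : oddLetter (2 * t + 1) = rot (oddLetter t) := by
  rw [oddLetter, dif_neg (by omega), show (2 * t + 1) / 2 = t by omega]

theorem oddLetter_ne_a (t : ℕ) : oddLetter t ≠ A.a := by
  induction t using Nat.strong_induction_on with
  | _ t ih =>
    obtain ⟨s, rfl | rfl⟩ := Nat.even_or_odd' t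
    · rw [oddLetter_of_even (by omega)]; simp
    · rw [oddLetter_two_mul_add_one]; exact rot_ne_a (ih s (by omega))

theorem even_of_oddLetter_eq_x {m : ℕ} (h : oddLetter m = A.x) (h' : oddLetter (m + 2) = A.x) :
    m % 2 = 0 := by
  by_contra hm
  obtain ⟨k, rfl⟩ : ∃ k, m = 2 * k + 1 := ⟨m / 2, by omega⟩
  rw [oddLetter_two_mul_add_one, rot_eq_x_iff] at h
  rw [show 2 * k + 1 + 2 = 2 * (k + 1) + 1 by ring, oddLetter_two_mul_add_one, rot_eq_x_iff] at h'
  rcases Nat.mod_two_eq_zero_or_one k with hk | hk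
  · simp [oddLetter_of_even hk] at h
  · simp [oddLetter_of_even (show (k + 1) % 2 = 0 by omega)] at h'

theorem oddLetter_two_pow_mul_sub_one (m j : ℕ) :
    oddLetter (2 ^ m * (j + 1) - 1) = rot^[m] (oddLetter j) := by
  induction m with
  | zero => simp
  | succ m ih =>
    have : 2 ^ (m + 1) * (j + 1) - 1 = 2 * (2 ^ m * (j + 1) - 1) + 1 := by
      have := Nat.one_le_two_pow (n := m)
      rw [pow_succ, mul_comm _ 2, mul_assoc]
      have : 1 ≤ 2 ^ m * (j + 1) := Nat.one_le_iff_ne_zero.mpr (by positivity)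
      omega
    rw [this, oddLetter_two_mul_add_one, ih, Function.iterate_succ_apply']

theorem oddLetter_two_pow_add {N t : ℕ} (ht : t < 2 ^ N - 1) :
    oddLetter (2 ^ N + t) = oddLetter t := by
  induction N generalizing t with
  | zero => omega
  | succ N ih =>
    rw [pow_succ] at ht ⊢
    obtain ⟨s, rfl | rfl⟩ := Nat.even_or_odd' t
    · rw [oddLetter_of_even (by omega), oddLetter_of_even (by omega)]
    · rw [show 2 ^ N * 2 + (2 * s + 1) = 2 * (2 ^ N + s) + 1 by ring, oddLetter_two_mul_add_one,
        oddLetter_two_mul_add_one, ih (by omega)]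

def etaFormula (m : ℕ) : A := if m % 2 = 0 then A.a else oddLetter (m / 2)

theorem etaFormula_two_pow_add {N k : ℕ} (hk : k < 2 ^ (N + 1) - 1) :
    etaFormula (2 ^ (N + 1) + k) = etaFormula k := by
  rw [pow_succ] at hk ⊢
  unfold etaFormula
  split_ifs with h₁ h₂ h₂ <;> try omega
  · rfl
  · rw [show (2 ^ N * 2 + k) / 2 = 2 ^ N + k / 2 by omega, oddLetter_two_pow_add (by omega)]

theorem getD_pw (N m : ℕ) (hm : m < (pw N).length) : (pw N).getD m A.a = etaFormula m := by
  induction N generalizing m with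
  | zero => simp_all [pw, etaFormula]
  | succ N ih =>
    have hlen := length_pw N
    have := Nat.one_le_two_pow (n := N + 1)
    rw [pw_succ] at hm ⊢
    rw [List.length_append, List.length_cons] at hm
    rcases lt_trichotomy m (pw N).length with h | rfl | h
    · rw [List.getD_append _ _ _ _ h, ih m h]
    · rw [List.getD_append_right _ _ _ _ le_rfl, Nat.sub_self, List.getD_cons_zero, etaFormula,
        if_neg (by rw [pow_succ] at hlen; omega), hlen,
        show (2 ^ (N + 1) - 1) / 2 = 2 ^ N * (0 + 1) - 1 by rw [pow_succ]; omega,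
        oddLetter_two_pow_mul_sub_one, oddLetter_of_even rfl]
    · rw [List.getD_append_right _ _ _ _ h.le,
        show m - (pw N).length = (m - 2 ^ (N + 1)) + 1 by omega, List.getD_cons_succ,
        ih _ (by omega), ← etaFormula_two_pow_add (N := N) (by omega)]
      congr 1
      omega

theorem eta_eq_etaFormula (m : ℕ) : eta m = etaFormula m := by
  apply getD_pw
  rw [length_pw, pow_succ, pow_succ]
  have := Nat.lt_two_pow_self (n := m)
  omega

theorem eta_ne_a_iff {m : ℕ} : eta m ≠ A.a ↔ m % 2 = 1 := by
  rw [eta_eq_etaFormula, etaFormula]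
  split_ifs with h
  · simp [h]
  · simp only [ne_eq, oddLetter_ne_a, not_false_eq_true, true_iff]; omega

theorem eta_add_two_pow {n q m : ℕ} (hq : q + 1 = 2 ^ (n + 1) * m) :
    eta (q + 2 ^ (n + 1)) = rot^[n] (oddLetter m) := by
  have hq' : q + 1 = 2 * (2 ^ n * m) := by rw [hq, pow_succ]; ring
  have hodd : q + 2 ^ (n + 1) = 2 * (2 ^ n * (m + 1) - 1) + 1 := by
    rw [pow_succ, mul_add, mul_one]; omega
  rw [hodd, eta_eq_etaFormula, etaFormula, if_neg (by omega),
    show (2 * (2 ^ n * (m + 1) - 1) + 1) / 2 = 2 ^ n * (m + 1) - 1 by omega,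
    oddLetter_two_pow_mul_sub_one]

theorem forall_lt_length_append_cons_iff {α : Type*} (f : ℕ → α) (l₁ l₂ : List α) (b d : α) :
    (∀ k < (l₁ ++ b :: l₂).length, f k = (l₁ ++ b :: l₂).getD k d) ↔
      (∀ k < l₁.length, f k = l₁.getD k d) ∧ f l₁.length = b ∧
        ∀ k < l₂.length, f (l₁.length + 1 + k) = l₂.getD k d := by
  simp only [List.length_append, List.length_cons]
  constructor
  · intro h
    refine ⟨fun k hk => ?_, ?_, fun k hk => ?_⟩
    · rw [h k (by omega), List.getD_append _ _ _ _ hk]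
    · rw [h _ (by omega), List.getD_append_right _ _ _ _ le_rfl, Nat.sub_self, List.getD_cons_zero]
    · rw [h _ (by omega), List.getD_append_right _ _ _ _ (by omega),
        show l₁.length + 1 + k - l₁.length = k + 1 by omega, List.getD_cons_succ]
  · rintro ⟨h₁, hb, h₂⟩ k hk
    rcases lt_trichotomy k l₁.length with h | rfl | h
    · rw [h₁ k h, List.getD_append _ _ _ _ h]
    · rw [hb, List.getD_append_right _ _ _ _ le_rfl, Nat.sub_self, List.getD_cons_zero]
    · obtain ⟨j, rfl⟩ : ∃ j, k = l₁.length + 1 + j := ⟨k - l₁.length - 1, by omega⟩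
      rw [h₂ j (by omega), List.getD_append_right _ _ _ _ (by omega),
        show l₁.length + 1 + j - l₁.length = j + 1 by omega, List.getD_cons_succ]

def IsEtaMarker (n q : ℕ) : Prop :=
  eta q ≠ A.a ∧ ∀ k < (pw n).length, eta (q + 1 + k) = (pw n).getD k A.a

theorem isEtaMarker_succ_iff {n q : ℕ} :
    IsEtaMarker (n + 1) q ↔
      IsEtaMarker n q ∧ eta (q + 2 ^ (n + 1)) = rot^[n] A.x ∧ IsEtaMarker n (q + 2 ^ (n + 1)) := by
  have hlen : (pw n).length + 1 = 2 ^ (n + 1) := by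
    rw [length_pw]; have := Nat.one_le_two_pow (n := n + 1); omega
  unfold IsEtaMarker
  rw [pw_succ, forall_lt_length_append_cons_iff (fun k => eta (q + 1 + k)),
    show q + 1 + (pw n).length = q + 2 ^ (n + 1) by omega]
  simp only [show ∀ k, q + 1 + ((pw n).length + 1 + k) = q + 2 ^ (n + 1) + 1 + k from
    fun k => by omega]
  constructor
  · rintro ⟨hq, h₁, hc, h₂⟩
    exact ⟨⟨hq, h₁⟩, hc, hc ▸ iterate_rot_x_ne_a n, h₂⟩
  · rintro ⟨⟨hq, h₁⟩, hc, -, h₂⟩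
    exact ⟨hq, h₁, hc, h₂⟩

theorem isEtaMarker_of_dvd {n q : ℕ} (h : 2 ^ (n + 1) ∣ q + 1) : IsEtaMarker n q := by
  induction n generalizing q with
  | zero =>
    refine ⟨eta_ne_a_iff.2 (by omega), fun k hk => ?_⟩
    obtain rfl : k = 0 := by simpa [pw] using hk
    by_contra hne
    have := eta_ne_a_iff.1 hne
    omega
  | succ n ih =>
    obtain ⟨m, hm⟩ := h
    have hq : q + 1 = 2 ^ (n + 1) * (2 * m) := by rw [hm, pow_succ]; ring
    refine isEtaMarker_succ_iff.2 ⟨ih ⟨2 * m, hq⟩, ?_, ih ⟨2 * m + 1, ?_⟩⟩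
    · rw [eta_add_two_pow hq, oddLetter_of_even (by omega)]
    · rw [mul_add, mul_one, ← hq]; omega

theorem dvd_of_isEtaMarker {n q : ℕ} (h : IsEtaMarker n q) (h' : IsEtaMarker n (q + 2 ^ (n + 1))) :
    2 ^ (n + 1) ∣ q + 1 := by
  induction n generalizing q with
  | zero => exact Nat.dvd_of_mod_eq_zero (by have := eta_ne_a_iff.1 h.1; omega)
  | succ n ih =>
    rw [isEtaMarker_succ_iff] at h h'
    obtain ⟨m, hm⟩ := ih h.1 h.2.2
    have hm' : q + 2 ^ (n + 1 + 1) + 1 = 2 ^ (n + 1) * (m + 2) := by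
      rw [pow_succ 2 (n + 1), mul_add, ← hm]; ring
    have hx : oddLetter m = A.x :=
      rot_injective.iterate n ((eta_add_two_pow hm).symm.trans h.2.1)
    have hx' : oddLetter (m + 2) = A.x :=
      rot_injective.iterate n ((eta_add_two_pow hm').symm.trans h'.2.1)
    obtain ⟨k, rfl⟩ : ∃ k, m = 2 * k := ⟨m / 2, by have := even_of_oddLetter_eq_x hx hx'; omega⟩
    exact ⟨k, by rw [hm, pow_succ 2 (n + 1)]; ring⟩

theorem isEtaMarker_and_isEtaMarker_add_iff {n q : ℕ} :
    IsEtaMarker n q ∧ IsEtaMarker n (q + 2 ^ (n + 1)) ↔ 2 ^ (n + 1) ∣ q + 1 :=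
  ⟨fun h => dvd_of_isEtaMarker h.1 h.2, fun h =>
    ⟨isEtaMarker_of_dvd h, isEtaMarker_of_dvd (by rw [add_right_comm]; exact dvd_add h dvd_rfl)⟩⟩

def IsMarker (n : ℕ) (ω : ℤ → A) (q : ℤ) : Prop :=
  ω q ≠ A.a ∧ ∀ k < (pw n).length, ω (q + 1 + k) = (pw n).getD k A.a

def IsDoubleMarker (n : ℕ) (ω : ℤ → A) (q : ℤ) : Prop :=
  IsMarker n ω q ∧ IsMarker n ω (q + 2 ^ (n + 1))

/-- The coercion `List ℕ → List ℤ` in `OmegaTau` and `IsNPartition` elaborates to this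
`do` block. -/
theorem map_range_natCast {α : Type*} (f : ℤ → α) (N : ℕ) :
    List.map f (do let k ← List.range N; pure (k : ℤ)) = (List.range N).map (fun k : ℕ => f k) := by
  simp [← List.map_eq_flatMap]

theorem OmegaTau.exists_shift {ω : ℤ → A} (hω : OmegaTau ω) (i : ℤ) (N : ℕ) :
    ∃ s : ℤ, 0 ≤ i + s ∧ ∀ r, i ≤ r → r < i + N → ω r = eta (r + s).toNat := by
  obtain ⟨j, hj⟩ := hω i N
  rw [map_range_natCast, List.length_map, List.length_range, List.map_inj_left] at hj
  refine ⟨j - i, by omega, fun r hr hr' => ?_⟩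
  convert hj (r - i).toNat (List.mem_range.2 (by omega)) using 2 <;> omega

theorem isDoubleMarker_iff_dvd {n : ℕ} {ω : ℤ → A} {i s : ℤ} {N : ℕ} (hs : 0 ≤ i + s)
    (hω : ∀ r, i ≤ r → r < i + N → ω r = eta (r + s).toNat) {q : ℤ} (hi : i ≤ q)
    (hq : q + 2 * 2 ^ (n + 1) ≤ i + N) :
    IsDoubleMarker n ω q ↔ (2 ^ (n + 1) : ℤ) ∣ q + s + 1 := by
  have hlen : ((pw n).length : ℤ) + 1 = 2 ^ (n + 1) := by
    rw [length_pw, Nat.cast_sub Nat.one_le_two_pow]; push_cast; ring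
  have hmarker : ∀ r, i ≤ r → r + 2 ^ (n + 1) ≤ i + N →
      (IsMarker n ω r ↔ IsEtaMarker n (r + s).toNat) := by
    intro r hr hr'
    unfold IsMarker IsEtaMarker
    rw [hω r hr (by omega)]
    refine and_congr Iff.rfl (forall₂_congr fun k hk => ?_)
    rw [hω _ (by omega) (by omega), show (r + 1 + k + s).toNat = (r + s).toNat + 1 + k by omega]
  obtain ⟨t, ht⟩ : ∃ t : ℕ, q + s = t := ⟨(q + s).toNat, by omega⟩
  rw [IsDoubleMarker, hmarker q hi (by omega), hmarker _ (by omega) (by omega),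
    show q + 2 ^ (n + 1) + s = ((t + 2 ^ (n + 1) : ℕ) : ℤ) by push_cast; omega, ht,
    Int.toNat_natCast, Int.toNat_natCast, isEtaMarker_and_isEtaMarker_add_iff,
    ← Int.natCast_dvd_natCast]
  norm_cast

theorem OmegaTau.exists_isDoubleMarker {ω : ℤ → A} (hω : OmegaTau ω) (n : ℕ) :
    ∃ q, IsDoubleMarker n ω q := by
  obtain ⟨s, hs, hω⟩ := hω.exists_shift 0 (3 * 2 ^ (n + 1))
  have hE : (0 : ℤ) < 2 ^ (n + 1) := by positivity
  refine ⟨-(s + 1) % 2 ^ (n + 1), (isDoubleMarker_iff_dvd hs hω ?_ ?_).2 ?_⟩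
  · exact Int.emod_nonneg _ hE.ne'
  · have := Int.emod_lt_of_pos (-(s + 1)) hE
    push_cast
    omega
  · refine ⟨-(-(s + 1) / 2 ^ (n + 1)), ?_⟩
    linarith [Int.mul_ediv_add_emod (-(s + 1)) (2 ^ (n + 1))]

theorem OmegaTau.isDoubleMarker_iff {ω : ℤ → A} (hω : OmegaTau ω) {n : ℕ} {q : ℤ}
    (h : IsDoubleMarker n ω q) (q' : ℤ) : IsDoubleMarker n ω q' ↔ (2 ^ (n + 1) : ℤ) ∣ q' - q := by
  obtain ⟨s, hs, hω⟩ := hω.exists_shift (min q q') ((q - q').natAbs + 2 * 2 ^ (n + 1))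
  have hq := (isDoubleMarker_iff_dvd hs hω (min_le_left q q')
    (by simp only [Nat.cast_add, Nat.cast_mul, Nat.cast_pow, Nat.cast_ofNat]; omega)).1 h
  rw [isDoubleMarker_iff_dvd hs hω (min_le_right q q')
      (by simp only [Nat.cast_add, Nat.cast_mul, Nat.cast_pow, Nat.cast_ofNat]; omega),
    show q' + s + 1 = q' - q + (q + s + 1) by ring]
  exact dvd_add_left hq

theorem isNPartition_iff {n : ℕ} {ω : ℤ → A} {P : ZMod (2 ^ (n + 1))} :
    IsNPartition n ω P ↔ ∀ q : ℤ, (q : ZMod (2 ^ (n + 1))) = P → IsMarker n ω q := by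
  refine forall₂_congr fun q _ => and_congr ?_ ?_
  · cases ω q <;> simp
  · rw [map_range_natCast, ← length_pw, List.ext_getElem_iff]
    simp only [List.length_map, List.length_range, List.getElem_map, List.getElem_range, true_and]
    exact forall₂_congr fun k hk => by rw [List.getD_eq_getElem _ _ hk, forall_prop_of_true hk]

section

variable {n : ℕ} {ω : ℤ → A}

theorem IsNPartition.isDoubleMarker {P : ZMod (2 ^ (n + 1))} (h : IsNPartition n ω P) {q : ℤ}
    (hq : (q : ZMod (2 ^ (n + 1))) = P) : IsDoubleMarker n ω q := by
  rw [isNPartition_iff] at h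
  refine ⟨h q hq, h _ ?_⟩
  push_cast
  rw [← hq, add_eq_left]
  exact_mod_cast ZMod.natCast_self (2 ^ (n + 1))

theorem IsNPartition.shift {P : ZMod (2 ^ (n + 1))} (h : IsNPartition n ω P) :
    IsNPartition n (fun m => ω (m + 1)) (P - 1) := by
  rw [isNPartition_iff] at h ⊢
  intro q hq
  obtain ⟨h₀, h₁⟩ := h (q + 1) (by push_cast; rw [hq]; ring)
  exact ⟨h₀, fun k hk => (congrArg ω (by ring)).trans (h₁ k hk)⟩

theorem OmegaTau.isNPartition_iff_isDoubleMarker (hω : OmegaTau ω) {q : ℤ} :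
    IsNPartition n ω q ↔ IsDoubleMarker n ω q := by
  refine ⟨fun h => h.isDoubleMarker rfl, fun h => isNPartition_iff.2 fun r hr => ?_⟩
  have hdvd := (ZMod.intCast_eq_intCast_iff_dvd_sub _ _ _).1 hr.symm
  exact ((hω.isDoubleMarker_iff h r).2 (by exact_mod_cast hdvd)).1

theorem OmegaTau.isNPartition_unique (hω : OmegaTau ω) {P Q : ZMod (2 ^ (n + 1))}
    (hP : IsNPartition n ω P) (hQ : IsNPartition n ω Q) : P = Q := by
  obtain ⟨p, rfl⟩ := ZMod.intCast_surjective P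
  obtain ⟨q, rfl⟩ := ZMod.intCast_surjective Q
  rw [hω.isNPartition_iff_isDoubleMarker] at hP hQ
  exact (ZMod.intCast_eq_intCast_iff_dvd_sub _ _ _).2
    (by exact_mod_cast (hω.isDoubleMarker_iff hP q).1 hQ)

end

theorem OmegaTau.exists_isNPartition {ω : ℤ → A} (hω : OmegaTau ω) (n : ℕ) :
    ∃ P : ZMod (2 ^ (n + 1)), IsNPartition n ω P :=
  let ⟨q, hq⟩ := hω.exists_isDoubleMarker n
  ⟨q, hω.isNPartition_iff_isDoubleMarker.2 hq⟩

theorem isOpen_setOf_isMarker (n : ℕ) (q : ℤ) : IsOpen {ω : ℤ → A | IsMarker n ω q} := by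
  have hcoord (p : ℤ) (s : Set A) : IsOpen {ω : ℤ → A | ω p ∈ s} :=
    (isOpen_discrete s).preimage (continuous_apply p)
  simp only [IsMarker, Set.ofPred_and, Set.ofPred_forall]
  exact (hcoord q {A.a}ᶜ).inter ((Set.finite_lt_nat _).isOpen_biInter fun k _ => hcoord _ {_})

theorem isOpen_setOf_isNPartition (n : ℕ) (P : ZMod (2 ^ (n + 1))) :
    IsOpen {ω : {ω : ℤ → A // OmegaTau ω} | IsNPartition n ω.1 P} := by
  have : {ω : {ω : ℤ → A // OmegaTau ω} | IsNPartition n ω.1 P} =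
      ⋃ q ∈ {q : ℤ | (q : ZMod (2 ^ (n + 1))) = P}, Subtype.val ⁻¹' {ω | IsDoubleMarker n ω q} := by
    ext ω
    simp only [Set.mem_ofPred_eq, Set.mem_iUnion, Set.mem_preimage, exists_prop]
    constructor
    · intro h
      obtain ⟨q, rfl⟩ := ZMod.intCast_surjective P
      exact ⟨q, rfl, h.isDoubleMarker rfl⟩
    · rintro ⟨q, rfl, hq⟩
      exact ω.2.isNPartition_iff_isDoubleMarker.2 hq
  rw [this]
  exact isOpen_biUnion fun q _ =>
    ((isOpen_setOf_isMarker n q).inter (isOpen_setOf_isMarker n _)).preimage continuous_subtype_val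

/-- **Existence and uniqueness of `n`-partitions**: every `ω ∈ Ω_τ` has a unique
`n`-partition `P⁽ⁿ⁾(ω)`, and the resulting map `P⁽ⁿ⁾ : Ω_τ → ℤ/2^(n+1)ℤ` is
continuous and shift-equivariant (`P⁽ⁿ⁾(Tω) = P⁽ⁿ⁾(ω) - 1`). -/
theorem n_partition_exists_unique_continuous_equivariant (n : ℕ) :
    ∃ P : {ω : ℤ → A // OmegaTau ω} → ZMod (2 ^ (n + 1)),
      (∀ ω : {ω : ℤ → A // OmegaTau ω}, IsNPartition n ω.1 (P ω)) ∧
      (∀ (ω : {ω : ℤ → A // OmegaTau ω}) (Q : ZMod (2 ^ (n + 1))),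
        IsNPartition n ω.1 Q → Q = P ω) ∧
      @Continuous {ω : ℤ → A // OmegaTau ω} (ZMod (2 ^ (n + 1))) _ ⊥ P ∧
      (∀ (ω : {ω : ℤ → A // OmegaTau ω}) (hT : OmegaTau (fun m => ω.1 (m + 1))),
        P ⟨fun m => ω.1 (m + 1), hT⟩ = P ω - 1) := by
  choose P hP using fun ω : {ω : ℤ → A // OmegaTau ω} => ω.2.exists_isNPartition n
  have hunique (ω : {ω : ℤ → A // OmegaTau ω}) (Q) (hQ : IsNPartition n ω.1 Q) : Q = P ω :=
    ω.2.isNPartition_unique hQ (hP ω)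
  refine ⟨P, hP, hunique, ?_, fun ω hT => (hunique ⟨_, hT⟩ _ (hP ω).shift).symm⟩
  let _ : TopologicalSpace (ZMod (2 ^ (n + 1))) := ⊥
  have : DiscreteTopology (ZMod (2 ^ (n + 1))) := ⟨rfl⟩
  refine continuous_discrete_rng.2 fun c => ?_
  convert isOpen_setOf_isNPartition n c using 1
  ext ω
  exact ⟨fun h => h ▸ hP ω, fun h => (hunique ω c h).symm⟩
end
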